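/- Let N ≥ 2, θ ∈ ℝ, let A ∈ ℂ^{2×4} be of IBC form with associated row vector B, and let (ψ⁽¹⁾,…,ψ⁽ᴺ⁾) be a family of C¹ multi-time wave functions on the closures of the domains 𝒮₁⁽ⁿ⁾ satisfying the multi-time equations i(∂_{t_k} − s_k∂_{z_k})ψ⁽ⁿ⁾_{s₁…sₙ} = f⁽ⁿ⁾_{k,s₁…sₙ} with the model source terms, and the interior-boundary conditions. Then the tensor currents j^{(n)} of the ψ⁽ⁿ⁾ satisfy local probability conservation in coordinates: (i) for every k = 1,…,N and all fixed μ_j ∈ {0,1} (j≠k): ∂_{t_k} j^{(N),(…,μ_k=0,…)} + ∂_{z_k} j^{(N),(…,μ_k=1,…)} = 0 on 𝒮₁⁽ᴺ⁾; and (ii) for every n = 1,…,N−1, k = 1,…,n, all fixed μ_j (j≠k) and all (x₁,…,xₙ) ∈ 𝒮₁⁽ⁿ⁾: j^{(n+1),(μ₁,…,μ_{k−1},0,1,μ_{k+1},…,μₙ)}(x₁,…,x_k,x_k,…,xₙ) − j^{(n+1),(μ₁,…,μ_{k−1},1,0,μ_{k+1},…,μₙ)}(x₁,…,x_k,x_k,…,xₙ)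 = (−1)^k ( ∂_{t_k} j^{(n),(…,μ_k=0,…)} + ∂_{z_k} j^{(n),(…,μ_k=1,…)} )(x₁,…,xₙ). -/

import Mathlib

open scoped BigOperators
open MeasureTheory

noncomputable section

/-- spin value: `false` ↦ −1, `true` ↦ +1 -/
def sval (b : Bool) : ℝ := if b then 1 else -1

/-- ordered spacelike configurations 𝒮₁⁽ⁿ⁾ -/
def Sconf (n : ℕ) : Set (Fin n → ℝ × ℝ) :=
  {x | (∀ i j, i ≠ j → ((x i).1 - (x j).1) ^ 2 < ((x i).2 - (x j).2) ^ 2) ∧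
       ∀ i j, i < j → (x i).2 < (x j).2}

/-- ordered spatial configurations Zₙ -/
def Zconf (n : ℕ) : Set (Fin n → ℝ) := {z | ∀ i j : Fin n, i < j → z i < z j}

/-- partial derivative ∂_{t_k} (within the set `S`) -/
def dT {n : ℕ} {F : Type*} [NormedAddCommGroup F] [NormedSpace ℝ F]
    (S : Set (Fin n → ℝ × ℝ)) (f : (Fin n → ℝ × ℝ) → F) (k : Fin n)
    (x : Fin n → ℝ × ℝ) : F :=
  fderivWithin ℝ f S x (Pi.single k ((1 : ℝ), (0 : ℝ)))

/-- partial derivative ∂_{z_k} (within the set `S`) -/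
def dZ {n : ℕ} {F : Type*} [NormedAddCommGroup F] [NormedSpace ℝ F]
    (S : Set (Fin n → ℝ × ℝ)) (f : (Fin n → ℝ × ℝ) → F) (k : Fin n)
    (x : Fin n → ℝ × ℝ) : F :=
  fderivWithin ℝ f S x (Pi.single k ((0 : ℝ), (1 : ℝ)))

/-- partial derivative ∂_{z_k} for functions of spatial variables only -/
def dZr {n : ℕ} {F : Type*} [NormedAddCommGroup F] [NormedSpace ℝ F]
    (S : Set (Fin n → ℝ)) (f : (Fin n → ℝ) → F) (k : Fin n) (z : Fin n → ℝ) : F :=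
  fderivWithin ℝ f S z (Pi.single k (1 : ℝ))

/-- C¹ functions on `S` that are bounded with bounded derivative -/
def C1bOn {E F : Type*} [NormedAddCommGroup E] [NormedSpace ℝ E]
    [NormedAddCommGroup F] [NormedSpace ℝ F] (S : Set E) (f : E → F) : Prop :=
  ContDiffOn ℝ 1 f S ∧ (∃ C, ∀ x ∈ S, ‖f x‖ ≤ C) ∧ ∃ C, ∀ x ∈ S, ‖fderivWithin ℝ f S x‖ ≤ C

/-- the collision configuration (x₁,…,x_k,x_k,…,xₙ) -/
def double {n : ℕ} {α : Type*} (k : Fin n) (x : Fin n → α) : Fin (n + 1) → α :=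
  Fin.insertNth k.castSucc (x k) x

/-- the index tuple (s₁,…,s_{k−1},a,b,s_{k+1},…,sₙ) -/
def pairIns {n : ℕ} {α : Type*} (k : Fin n) (s : Fin n → α) (a b : α) : Fin (n + 1) → α :=
  Fin.insertNth k.castSucc a (Function.update s k b)

/-- the Dirac tensor current j^{μ₁…μₙ}; `μ i = true` means μᵢ = 1 -/
def current {n : ℕ} (ψ : (Fin n → ℝ × ℝ) → (Fin n → Bool) → ℂ) (μ : Fin n → Bool)
    (x : Fin n → ℝ × ℝ) : ℝ :=
  ∑ s : Fin n → Bool, Complex.normSq (ψ x s) * ∏ i, (if μ i then -(sval (s i)) else 1)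


/-- `A` is of IBC form: A_s^{tu} = 0 for t = u and the matrix Ã of conjugated entries
(row (−+): ((A₋^{−+})*, (A₊^{−+})*), row (+−): ((A₋^{+−})*, (A₊^{+−})*)) has the
rank-one form [[w₁,w₂],[w₁e^{iφ},w₂e^{iφ}]]. -/
def IBCform (A : Bool → Bool × Bool → ℂ) : Prop :=
  (∀ s t : Bool, A s (t, t) = 0) ∧
    ∃ (w₁ w₂ : ℂ) (φ : ℝ),
      (starRingEnd ℂ) (A false (false, true)) = w₁ ∧
      (starRingEnd ℂ) (A true (false, true)) = w₂ ∧
      (starRingEnd ℂ) (A false (true, false)) = w₁ * Complex.exp (φ * Complex.I) ∧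
      (starRingEnd ℂ) (A true (true, false)) = w₂ * Complex.exp (φ * Complex.I)

/-- the row vector B = (1/2i)(1, e^{iθ})Ã associated with `A` and the phase θ -/
def Bof (θ : ℝ) (A : Bool → Bool × Bool → ℂ) (s : Bool) : ℂ :=
  (1 / (2 * Complex.I)) *
    ((starRingEnd ℂ) (A s (false, true))
      + Complex.exp (θ * Complex.I) * (starRingEnd ℂ) (A s (true, false)))

/-!
Each component ψ⁽ⁿ⁾_s obeys a transport equation `(∂_{t_k} - s_k ∂_{z_k}) ψ_s = -i f_{k,s}`,
so `∂_{t_k} j^{…0…} + ∂_{z_k} j^{…1…}` is a weighted sum of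
`2 Re (conj ψ_s (∂_{t_k} - s_k ∂_{z_k}) ψ_s)`.
In the top sector this vanishes. Below it, the source turns each term into
`±2 Im (conj ψ_s Σ A ψ⁽ⁿ⁺¹⁾)`; pairing the two values of `s_k` and using the IBC form of `A`
rewrites the pair as `Im (conj W (a + conj y c))`, where `W = w₁ ψ₋ + w₂ ψ₊`, `y = e^{iφ}`,
`a = ψ⁽ⁿ⁺¹⁾_{−+}`, `c = ψ⁽ⁿ⁺¹⁾_{+−}` at the collision configuration. The interior-boundary condition
reads `(1 + e^{iθ} y) W = 2i (a - e^{iθ} c)`, and for unimodular `e^{iθ}`, `y` this forces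
`Im (conj W (a + conj y c)) = |c|² - |a|²`, which is exactly the jump of the tensor current of
sector `n + 1` across the collision configuration.
-/

open ComplexConjugate Finset Function Topology

theorem isOpen_Sconf (n : ℕ) : IsOpen (Sconf n) := by
  simp only [Sconf, Set.ofPred_and, Set.ofPred_forall]
  exact .inter
    (isOpen_iInter_of_finite fun _ => isOpen_iInter_of_finite fun _ =>
      isOpen_iInter_of_finite fun _ => isOpen_lt (by fun_prop) (by fun_prop))
    (isOpen_iInter_of_finite fun _ => isOpen_iInter_of_finite fun _ =>
      isOpen_iInter_of_finite fun _ => isOpen_lt (by fun_prop) (by fun_prop))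

theorem closure_Sconf_mem_nhds {n : ℕ} {x : Fin n → ℝ × ℝ} (hx : x ∈ Sconf n) :
    closure (Sconf n) ∈ 𝓝 x :=
  Filter.mem_of_superset ((isOpen_Sconf n).mem_nhds hx) subset_closure

theorem sum_sum_update_eq_card_smul {ι β M : Type*} [DecidableEq ι] [Fintype ι] [Fintype β]
    [AddCommMonoid M] (k : ι) (f : (ι → β) → M) :
    ∑ s, ∑ b, f (update s k b) = Fintype.card β • ∑ s, f s := by
  have hinv : Involutive fun p : (ι → β) × β => (update p.1 k p.2, p.1 k) := by
    rintro ⟨s, b⟩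
    simp
  calc ∑ s, ∑ b, f (update s k b)
      = ∑ p : (ι → β) × β, f (hinv.toPerm _ p).1 :=
        (Fintype.sum_prod_type' fun s b => f (update s k b)).symm
    _ = ∑ p : (ι → β) × β, f p.1 := Equiv.sum_comp _ fun p : (ι → β) × β => f p.1
    _ = Fintype.card β • ∑ s, f s := by
      rw [Fintype.sum_prod_type, Finset.smul_sum]
      simp

theorem im_conj_mul_eq_normSq_sub_normSq {z y a c W : ℂ} (hz : ‖z‖ = 1) (hy : ‖y‖ = 1)
    (hW : (1 + z * y) * W = 2 * Complex.I * (a - z * c)) :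
    (conj W * (a + conj y * c)).im = Complex.normSq c - Complex.normSq a := by
  have hz0 : z ≠ 0 := by rintro rfl; simp at hz
  have hy0 : y ≠ 0 := by rintro rfl; simp at hy
  by_cases hD : 1 + z * y = 0
  · have ha : a = z * c := by simpa [hD, sub_eq_zero, eq_comm] using hW
    have hv : a + conj y * c = 0 := by
      rw [ha, ← Complex.inv_eq_conj hy]; field_simp; linear_combination c * hD
    rw [hv, mul_zero, Complex.zero_im, ha, Complex.normSq_mul, Complex.normSq_eq_norm_sq z, hz]
    ring
  · have hDc : 1 + z⁻¹ * y⁻¹ ≠ 0 := by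
      rw [show 1 + z⁻¹ * y⁻¹ = (z * y)⁻¹ * (1 + z * y) by field_simp; ring]
      exact mul_ne_zero (by simp [hz0, hy0]) hD
    have hWc : (1 + z⁻¹ * y⁻¹) * conj W = -2 * Complex.I * (conj a - z⁻¹ * conj c) := by
      simpa [Complex.inv_eq_conj hz, Complex.inv_eq_conj hy, map_ofNat] using congrArg conj hW
    set X := conj W * (a + conj y * c)
    have hX : X - conj X = 2 * Complex.I * (c * conj c - a * conj a) := by
      simp only [X, map_mul, map_add, Complex.conj_conj]
      rw [← Complex.inv_eq_conj hy]
      -- multiplying by `|1 + z y|² = (1 + z y) (1 + z⁻¹ y⁻¹)` eliminates `W` and `conj W`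
      refine mul_left_cancel₀ (mul_ne_zero hD hDc) ?_
      linear_combination (norm := skip) ((1 + z * y) * (a + y⁻¹ * c)) * hWc
        - ((1 + z⁻¹ * y⁻¹) * (conj a + y * conj c)) * hW
      field_simp
      ring
    rw [Complex.sub_conj, Complex.mul_conj, Complex.mul_conj] at hX
    have h2 : ((2 * X.im : ℝ) : ℂ) = ((2 * (Complex.normSq c - Complex.normSq a) : ℝ) : ℂ) := by
      refine mul_right_cancel₀ Complex.I_ne_zero ?_
      rw [hX]
      push_cast
      ring
    linarith [Complex.ofReal_injective h2]

@[simp] theorem sval_true : sval true = 1 := rfl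

@[simp] theorem sval_false : sval false = -1 := rfl

def spinWeight {n : ℕ} (μ s : Fin n → Bool) : ℝ := ∏ i, if μ i then -sval (s i) else 1

theorem current_eq_sum_spinWeight {n : ℕ} (ψ : (Fin n → ℝ × ℝ) → (Fin n → Bool) → ℂ)
    (μ : Fin n → Bool) (x : Fin n → ℝ × ℝ) :
    current ψ μ x = ∑ s, Complex.normSq (ψ x s) * spinWeight μ s := rfl

section SpinWeight

variable {n : ℕ} (μ s : Fin n → Bool) (k : Fin n)

theorem spinWeight_update (b : Bool) :
    spinWeight (update μ k b) s
      = (if b then -sval (s k) else 1) * spinWeight (update μ k false) s := by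
  simp only [spinWeight, ← mul_prod_erase univ _ (mem_univ k), update_self, Bool.false_eq_true,
    if_false, one_mul]
  exact congrArg _ <| prod_congr rfl fun i hi => by
    simp only [update_of_ne (ne_of_mem_erase hi)]

theorem spinWeight_update_false_update (b : Bool) :
    spinWeight (update μ k false) (update s k b) = spinWeight (update μ k false) s :=
  prod_congr rfl fun i _ => by rcases eq_or_ne i k with rfl | hi <;> simp [*]

theorem spinWeight_pairIns_insertNth (a b t : Bool) :
    spinWeight (pairIns k μ a b) (Fin.insertNth k.castSucc t s)
      = (if a then -sval t else 1) * spinWeight (update μ k b) s := by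
  simp only [spinWeight, Fin.prod_univ_succAbove _ k.castSucc, pairIns, Fin.insertNth_apply_same,
    Fin.insertNth_apply_succAbove]

theorem sum_spinWeight_mul_eq_sum_update (G : (Fin n → Bool) → ℝ) :
    ∑ s, spinWeight (update μ k false) s * G s
      = ∑ s, spinWeight (update μ k false) s * ((∑ b, G (update s k b)) / 2) := by
  have h := sum_sum_update_eq_card_smul k fun s => spinWeight (update μ k false) s * G s
  simp only [spinWeight_update_false_update, ← mul_sum, Fintype.card_bool, nsmul_eq_mul] at h
  simp only [mul_div_assoc', ← sum_div, h]
  ring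

end SpinWeight

theorem pairIns_update {n : ℕ} {α : Type*} (k : Fin n) (s : Fin n → α) (b t u : α) :
    pairIns k (update s k b) t u = pairIns k s t u := by
  simp only [pairIns, update_idem]

theorem insertNth_update_eq_pairIns {n : ℕ} {α : Type*} (k : Fin n) (s : Fin n → α) (t b : α) :
    Fin.insertNth k.castSucc t (update s k b) = pairIns k s t b := rfl

theorem current_pairIns {n : ℕ} (ψ : (Fin (n + 1) → ℝ × ℝ) → (Fin (n + 1) → Bool) → ℂ)
    (k : Fin n) (μ : Fin n → Bool) (a b : Bool) (X : Fin (n + 1) → ℝ × ℝ) :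
    current ψ (pairIns k μ a b) X = ∑ s, ∑ t, Complex.normSq (ψ X (Fin.insertNth k.castSucc t s))
      * ((if a then -sval t else 1) * spinWeight (update μ k b) s) := by
  rw [current_eq_sum_spinWeight, ← (Fin.insertNthEquiv (fun _ => Bool) k.castSucc).sum_comp,
    Fintype.sum_prod_type, sum_comm]
  refine sum_congr rfl fun s _ => sum_congr rfl fun t _ => ?_
  exact congrArg (_ * ·) (spinWeight_pairIns_insertNth μ s k a b t)

theorem current_pairIns_sub_current_pairIns {n : ℕ}
    (ψ : (Fin (n + 1) → ℝ × ℝ) → (Fin (n + 1) → Bool) → ℂ)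
    (k : Fin n) (μ : Fin n → Bool) (X : Fin (n + 1) → ℝ × ℝ) :
    current ψ (pairIns k μ false true) X - current ψ (pairIns k μ true false) X
      = ∑ s, spinWeight (update μ k false) s * (Complex.normSq (ψ X (pairIns k s true false))
          - Complex.normSq (ψ X (pairIns k s false true))) := by
  calc _ = ∑ s, spinWeight (update μ k false) s * ∑ t,
          Complex.normSq (ψ X (Fin.insertNth k.castSucc t s)) * (sval t - sval (s k)) := by
        rw [current_pairIns, current_pairIns, ← sum_sub_distrib]
        refine sum_congr rfl fun s _ => ?_
        rw [spinWeight_update μ s k true, mul_sum, ← sum_sub_distrib]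
        refine sum_congr rfl fun t _ => ?_
        simp only [Bool.false_eq_true, if_true, if_false]
        ring
    _ = _ := by
        rw [sum_spinWeight_mul_eq_sum_update]
        refine sum_congr rfl fun s _ => ?_
        simp only [Fintype.sum_bool, update_self, insertNth_update_eq_pairIns, sval_true,
          sval_false]
        ring

section Derivative

variable {n : ℕ} {ψ : (Fin n → ℝ × ℝ) → (Fin n → Bool) → ℂ} {x : Fin n → ℝ × ℝ}

theorem hasFDerivAt_current (hψ : ∀ s, DifferentiableAt ℝ (fun y => ψ y s) x)
    (μ : Fin n → Bool) :
    HasFDerivAt (current ψ μ)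
      (∑ s, spinWeight μ s • (2 • (innerSL ℝ (ψ x s)).comp (fderiv ℝ (fun y => ψ y s) x))) x := by
  have h : current ψ μ = fun y => ∑ s, ‖ψ y s‖ ^ 2 * spinWeight μ s := by
    funext y
    simp only [current_eq_sum_spinWeight, Complex.normSq_eq_norm_sq]
  rw [h]
  exact HasFDerivAt.fun_sum fun s _ => (hψ s).hasFDerivAt.norm_sq.mul_const _

theorem dT_current_add_dZ_current {S : Set (Fin n → ℝ × ℝ)} (hS : S ∈ 𝓝 x)
    (hψ : ∀ s, DifferentiableAt ℝ (fun y => ψ y s) x) (k : Fin n) (μ : Fin n → Bool) :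
    dT S (current ψ (update μ k false)) k x + dZ S (current ψ (update μ k true)) k x
      = ∑ s, spinWeight (update μ k false) s * (2 * (conj (ψ x s) *
          (dT S (fun y => ψ y s) k x - sval (s k) * dZ S (fun y => ψ y s) k x)).re) := by
  simp only [dT, dZ, fderivWithin_of_mem_nhds hS, (hasFDerivAt_current hψ _).fderiv,
    _root_.sum_apply, _root_.smul_apply, ContinuousLinearMap.comp_apply,
    innerSL_apply_apply, Complex.inner, ← sum_add_distrib]
  refine sum_congr rfl fun s _ => ?_
  rw [spinWeight_update μ s k true]
  simp only [mul_sub, Complex.sub_re, Complex.mul_re, Complex.conj_re, Complex.conj_im,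
    Complex.mul_im, Complex.ofReal_re, Complex.ofReal_im, smul_eq_mul, nsmul_eq_mul, Nat.cast_ofNat,
    if_true]
  ring

theorem dT_current_add_dZ_current_eq_zero {S : Set (Fin n → ℝ × ℝ)} (hS : S ∈ 𝓝 x)
    (hψ : ∀ s, DifferentiableAt ℝ (fun y => ψ y s) x) (k : Fin n)
    (hfree : ∀ s, Complex.I * (dT S (fun y => ψ y s) k x
      - sval (s k) * dZ S (fun y => ψ y s) k x) = 0) (μ : Fin n → Bool) :
    dT S (current ψ (update μ k false)) k x + dZ S (current ψ (update μ k true)) k x = 0 := by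
  rw [dT_current_add_dZ_current hS hψ]
  refine sum_eq_zero fun s _ => ?_
  rw [(mul_eq_zero.1 (hfree s)).resolve_left Complex.I_ne_zero]
  simp

end Derivative

theorem re_conj_mul_of_I_mul_eq {p D F : ℂ} {m : ℕ} (h : Complex.I * D = (-1) ^ m * F) :
    (-1 : ℝ) ^ m * (conj p * D).re = (conj p * F).im := by
  have hD : D = ((-1 : ℝ) ^ m : ℝ) * (-Complex.I * F) := by
    push_cast
    linear_combination (-Complex.I) * h + D * Complex.I_mul_I
  rw [hD, mul_left_comm, Complex.re_ofReal_mul, ← mul_assoc, ← pow_add, ← two_mul, pow_mul]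
  simp only [Complex.mul_re, Complex.mul_im, Complex.neg_re, Complex.neg_im, Complex.I_re,
    Complex.I_im, Complex.conj_re, Complex.conj_im, even_two, Even.neg_pow, one_pow, one_mul]
  ring

theorem IBCform.sum_im_conj_mul_source {A : Bool → Bool × Bool → ℂ} (hA : IBCform A) (θ : ℝ)
    (p : Bool → ℂ) (q : Bool → Bool → ℂ)
    (hibc : q false true - Complex.exp (θ * Complex.I) * q true false = ∑ b, Bof θ A b * p b) :
    ∑ b, (conj (p b) * ∑ t, ∑ u, A b (t, u) * q t u).im
      = Complex.normSq (q true false) - Complex.normSq (q false true) := by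
  obtain ⟨hdiag, w₁, w₂, φ, h₁, h₂, h₃, h₄⟩ := hA
  set y := Complex.exp (φ * Complex.I)
  have hsum : ∑ b, conj (p b) * ∑ t, ∑ u, A b (t, u) * q t u
      = conj (w₁ * p false + w₂ * p true) * (q false true + conj y * q true false) := by
    simp only [Fintype.sum_bool, hdiag, zero_mul, add_zero, zero_add]
    rw [← Complex.conj_conj (A false (false, true)), ← Complex.conj_conj (A true (false, true)),
      ← Complex.conj_conj (A false (true, false)), ← Complex.conj_conj (A true (true, false)),
      h₁, h₂, h₃, h₄]
    simp only [map_add, map_mul]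
    ring
  rw [← Complex.im_sum, hsum]
  refine im_conj_mul_eq_normSq_sub_normSq (Complex.norm_exp_ofReal_mul_I θ)
    (Complex.norm_exp_ofReal_mul_I φ) ?_
  simp only [Fintype.sum_bool, Bof, h₁, h₂, h₃, h₄] at hibc
  rw [hibc]
  field_simp
  ring

theorem current_pairIns_sub_eq_of_ibc {n : ℕ} {θ : ℝ} {A : Bool → Bool × Bool → ℂ}
    (hA : IBCform A) {ψ : (Fin n → ℝ × ℝ) → (Fin n → Bool) → ℂ}
    {ψ' : (Fin (n + 1) → ℝ × ℝ) → (Fin (n + 1) → Bool) → ℂ} {x : Fin n → ℝ × ℝ}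
    {S : Set (Fin n → ℝ × ℝ)} (hS : S ∈ 𝓝 x) (hψ : ∀ s, DifferentiableAt ℝ (fun y => ψ y s) x)
    (k : Fin n)
    (heq : ∀ s, Complex.I * (dT S (fun y => ψ y s) k x - sval (s k) * dZ S (fun y => ψ y s) k x)
      = (-1) ^ ((k : ℕ) + 1) * ∑ t, ∑ u, A (s k) (t, u) * ψ' (double k x) (pairIns k s t u))
    (hibc : ∀ s, ψ' (double k x) (pairIns k s false true)
        - Complex.exp (θ * Complex.I) * ψ' (double k x) (pairIns k s true false)
      = ∑ b, Bof θ A b * ψ x (update s k b))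
    (μ : Fin n → Bool) :
    current ψ' (pairIns k μ false true) (double k x)
        - current ψ' (pairIns k μ true false) (double k x)
      = (-1 : ℝ) ^ ((k : ℕ) + 1) *
          (dT S (current ψ (update μ k false)) k x + dZ S (current ψ (update μ k true)) k x) := by
  set F : (Fin n → Bool) → ℂ :=
    fun s => ∑ t, ∑ u, A (s k) (t, u) * ψ' (double k x) (pairIns k s t u)
  calc _ = ∑ s, spinWeight (update μ k false) s *
        (Complex.normSq (ψ' (double k x) (pairIns k s true false))
          - Complex.normSq (ψ' (double k x) (pairIns k s false true))) :=
        current_pairIns_sub_current_pairIns ψ' k μ (double k x)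
    _ = ∑ s, spinWeight (update μ k false) s *
        ((∑ b, 2 * (conj (ψ x (update s k b)) * F (update s k b)).im) / 2) := by
        refine sum_congr rfl fun s _ => ?_
        simp only [F, update_self, pairIns_update, ← mul_sum]
        rw [hA.sum_im_conj_mul_source θ _ _ (hibc s)]
        ring
    _ = ∑ s, spinWeight (update μ k false) s * (2 * (conj (ψ x s) * F s).im) :=
        (sum_spinWeight_mul_eq_sum_update μ k fun s => 2 * (conj (ψ x s) * F s).im).symm
    _ = _ := by
        rw [dT_current_add_dZ_current hS hψ, mul_sum]
        refine sum_congr rfl fun s _ => ?_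
        rw [← re_conj_mul_of_I_mul_eq (heq s)]
        ring

theorem ibc_implies_local_probability_conservation_general
    (N : ℕ) (θ : ℝ)
    (A : Bool → Bool × Bool → ℂ) (hA : IBCform A)
    (ψ : (n : ℕ) → (Fin n → ℝ × ℝ) → (Fin n → Bool) → ℂ)
    (hreg : ∀ n, 1 ≤ n → n ≤ N → ∀ s : Fin n → Bool,
      ContDiffOn ℝ 1 (fun x => ψ n x s) (closure (Sconf n)))
    -- the multi-time equations with the model source terms, for n < N …
    (heq : ∀ n, 1 ≤ n → n < N → ∀ (k : Fin n) (s : Fin n → Bool), ∀ x ∈ Sconf n,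
      Complex.I * (dT (closure (Sconf n)) (fun y => ψ n y s) k x
          - (sval (s k) : ℂ) * dZ (closure (Sconf n)) (fun y => ψ n y s) k x)
        = (-1 : ℂ) ^ ((k : ℕ) + 1) *
            ∑ t : Bool, ∑ u : Bool,
              A (s k) (t, u) * ψ (n + 1) (double k x) (pairIns k s t u))
    -- … and with f⁽ᴺ⁾ = 0 in the top sector
    (heqN : ∀ (k : Fin N) (s : Fin N → Bool), ∀ x ∈ Sconf N,
      Complex.I * (dT (closure (Sconf N)) (fun y => ψ N y s) k x
          - (sval (s k) : ℂ) * dZ (closure (Sconf N)) (fun y => ψ N y s) k x) = 0)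
    -- the interior-boundary conditions
    (hibc : ∀ n, 1 ≤ n → n < N → ∀ (k : Fin n) (s : Fin n → Bool),
      ∀ x ∈ closure (Sconf n),
        ψ (n + 1) (double k x) (pairIns k s false true)
            - Complex.exp (θ * Complex.I) * ψ (n + 1) (double k x) (pairIns k s true false)
          = ∑ b : Bool, Bof θ A b * ψ n x (Function.update s k b)) :
    -- (i) conservation of the top-sector current
    (∀ (k : Fin N) (μ : Fin N → Bool), ∀ x ∈ Sconf N,
        dT (closure (Sconf N)) (current (ψ N) (Function.update μ k false)) k x
          + dZ (closure (Sconf N)) (current (ψ N) (Function.update μ k true)) k x = 0)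
      -- (ii) detailed balance between sectors n and n+1
      ∧ ∀ n, 1 ≤ n → n < N → ∀ (k : Fin n) (μ : Fin n → Bool), ∀ x ∈ Sconf n,
          current (ψ (n + 1)) (pairIns k μ false true) (double k x)
              - current (ψ (n + 1)) (pairIns k μ true false) (double k x)
            = (-1 : ℝ) ^ ((k : ℕ) + 1) *
                (dT (closure (Sconf n)) (current (ψ n) (Function.update μ k false)) k x
                  + dZ (closure (Sconf n)) (current (ψ n) (Function.update μ k true)) k x) := by
  have hdiff : ∀ n, 1 ≤ n → n ≤ N → ∀ x ∈ Sconf n, ∀ s : Fin n → Bool,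
      DifferentiableAt ℝ (fun y => ψ n y s) x := fun n h₁ h₂ x hx s =>
    ((hreg n h₁ h₂ s).contDiffAt (closure_Sconf_mem_nhds hx)).differentiableAt one_ne_zero
  refine ⟨fun k μ x hx => ?_, fun n h₁ h₂ k μ x hx => ?_⟩
  · exact dT_current_add_dZ_current_eq_zero (closure_Sconf_mem_nhds hx)
      (hdiff N k.pos le_rfl x hx) k (heqN k · x hx) μ
  · exact current_pairIns_sub_eq_of_ibc hA (closure_Sconf_mem_nhds hx) (hdiff n h₁ h₂.le x hx) k
      (heq n h₁ h₂ k · x hx) (hibc n h₁ h₂ k · x (subset_closure hx)) μ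

/-- The interior-boundary conditions of the massless N-sector model
imply local probability conservation of the tensor currents in coordinates
(Theorem 5 of the paper). -/
theorem ibc_implies_local_probability_conservation
    (N : ℕ) (hN : 2 ≤ N) (θ : ℝ)
    (A : Bool → Bool × Bool → ℂ) (hA : IBCform A)
    (ψ : (n : ℕ) → (Fin n → ℝ × ℝ) → (Fin n → Bool) → ℂ)
    (hreg : ∀ n, 1 ≤ n → n ≤ N → ∀ s : Fin n → Bool,
      ContDiffOn ℝ 1 (fun x => ψ n x s) (closure (Sconf n)))
    -- the multi-time equations with the model source terms, for n < N …
    (heq : ∀ n, 1 ≤ n → n < N → ∀ (k : Fin n) (s : Fin n → Bool), ∀ x ∈ Sconf n,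
      Complex.I * (dT (closure (Sconf n)) (fun y => ψ n y s) k x
          - (sval (s k) : ℂ) * dZ (closure (Sconf n)) (fun y => ψ n y s) k x)
        = (-1 : ℂ) ^ ((k : ℕ) + 1) *
            ∑ t : Bool, ∑ u : Bool,
              A (s k) (t, u) * ψ (n + 1) (double k x) (pairIns k s t u))
    -- … and with f⁽ᴺ⁾ = 0 in the top sector
    (heqN : ∀ (k : Fin N) (s : Fin N → Bool), ∀ x ∈ Sconf N,
      Complex.I * (dT (closure (Sconf N)) (fun y => ψ N y s) k x
          - (sval (s k) : ℂ) * dZ (closure (Sconf N)) (fun y => ψ N y s) k x) = 0)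
    -- the interior-boundary conditions
    (hibc : ∀ n, 1 ≤ n → n < N → ∀ (k : Fin n) (s : Fin n → Bool),
      ∀ x ∈ closure (Sconf n),
        ψ (n + 1) (double k x) (pairIns k s false true)
            - Complex.exp (θ * Complex.I) * ψ (n + 1) (double k x) (pairIns k s true false)
          = ∑ b : Bool, Bof θ A b * ψ n x (Function.update s k b)) :
    -- (i) conservation of the top-sector current
    (∀ (k : Fin N) (μ : Fin N → Bool), ∀ x ∈ Sconf N,
        dT (closure (Sconf N)) (current (ψ N) (Function.update μ k false)) k x
          + dZ (closure (Sconf N)) (current (ψ N) (Function.update μ k true)) k x = 0)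
      -- (ii) detailed balance between sectors n and n+1
      ∧ ∀ n, 1 ≤ n → n < N → ∀ (k : Fin n) (μ : Fin n → Bool), ∀ x ∈ Sconf n,
          current (ψ (n + 1)) (pairIns k μ false true) (double k x)
              - current (ψ (n + 1)) (pairIns k μ true false) (double k x)
            = (-1 : ℝ) ^ ((k : ℕ) + 1) *
                (dT (closure (Sconf n)) (current (ψ n) (Function.update μ k false)) k x
                  + dZ (closure (Sconf n)) (current (ψ n) (Function.update μ k true)) k x) :=
  ibc_implies_local_probability_conservation_general N θ A hA ψ hreg heq heqN hibc
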